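/- Let f : ℝ → ℝ be C⁴ with f'(y) > 0 for all y. Fix c ∈ ℝ and set p = f'(c), q = f'(c)·c + f(c), and φ(y) = q − p·y − f((q − f(y))/p). Then the fourth derivative satisfies φ''''(c) = (f''(c)/f'(c))·(2·f'''(c) − 3·f''(c)²/f'(c)). In particular, if 2·f'''(c)·f'(c) = 3·f''(c)², then φ'''(c) = 0 and φ''''(c) = 0, so c is a root of φ of multiplicity at least five. -/

import Mathlib

/-!
Put `g y = (q - f y) / p`; it is the inverse of the model Poincaré map `P`, and
`φ = p • (g ∘ g - id)`. On `L₀` the point `c` is a fixed point of `g` with multiplier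
`g'(c) = -1`, and at such a flip fixed point the chain rule gives `(g ∘ g)'(c) = 1`,
`(g ∘ g)''(c) = 0`, `(g ∘ g)'''(c) = -2 g''' - 3 g''²` (twice the Schwarzian derivative of `g`)
and `(g ∘ g)''''(c) = -g''(c) · (g ∘ g)'''(c)`. As `g⁽ᵏ⁾ = -f⁽ᵏ⁾ / p`, this yields `φ'''(c)` and
`φ''''(c) = (f''(c) / f'(c)) · φ'''(c)`, so the flip condition `φ'''(c) = 0` forces `φ''''(c) = 0`.
-/

section FlipFixedPoint

variable {𝕜 : Type*} [NontriviallyNormedField 𝕜] {g f : 𝕜 → 𝕜} {x : 𝕜}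

theorem iteratedDeriv_comp_four (hg : ContDiff 𝕜 4 g) (hf : ContDiff 𝕜 4 f) :
    iteratedDeriv 4 (g ∘ f) x =
      iteratedDeriv 4 g (f x) * deriv f x ^ 4
        + 6 * iteratedDeriv 3 g (f x) * iteratedDeriv 2 f x * deriv f x ^ 2
        + iteratedDeriv 2 g (f x)
          * (3 * iteratedDeriv 2 f x ^ 2 + 4 * deriv f x * iteratedDeriv 3 f x)
        + deriv g (f x) * iteratedDeriv 4 f x := by
  have hg' : ContDiff 𝕜 3 (deriv g) := hg.deriv'
  have hf' : ContDiff 𝕜 3 (deriv f) := hf.deriv'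
  have hchain : deriv (g ∘ f) = (deriv g ∘ f) * deriv f := by
    funext y
    exact deriv_comp y (hg.differentiable (by norm_num) _) (hf.differentiable (by norm_num) _)
  rw [iteratedDeriv_succ', hchain,
    iteratedDeriv_mul (hg'.comp (hf.of_le (by norm_num))).contDiffAt hf'.contDiffAt]
  simp only [Finset.sum_range_succ, Finset.sum_range_zero]
  rw [iteratedDeriv_comp_three hg'.contDiffAt (hf.of_le (by norm_num)).contDiffAt,
    iteratedDeriv_comp_two (hg'.of_le (by norm_num)).contDiffAt (hf.of_le (by norm_num)).contDiffAt,
    iteratedDeriv_one,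
    deriv_comp x (hg'.differentiable (by norm_num) _) (hf.differentiable (by norm_num) _)]
  norm_num [← iteratedDeriv_succ', ← iteratedDeriv_one (f := deriv g)]
  ring

theorem deriv_comp_self_of_flip (hg : DifferentiableAt 𝕜 g x) (hfix : g x = x)
    (hflip : deriv g x = -1) : deriv (g ∘ g) x = 1 := by
  rw [deriv_comp x (by rwa [hfix]) hg, hfix, hflip]
  norm_num

theorem iteratedDeriv_two_comp_self_of_flip (hg : ContDiffAt 𝕜 2 g x) (hfix : g x = x)
    (hflip : deriv g x = -1) : iteratedDeriv 2 (g ∘ g) x = 0 := by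
  rw [iteratedDeriv_comp_two (by rwa [hfix]) hg, hfix, hflip]
  ring

theorem iteratedDeriv_three_comp_self_of_flip (hg : ContDiffAt 𝕜 3 g x) (hfix : g x = x)
    (hflip : deriv g x = -1) :
    iteratedDeriv 3 (g ∘ g) x = -2 * iteratedDeriv 3 g x - 3 * iteratedDeriv 2 g x ^ 2 := by
  rw [iteratedDeriv_comp_three (by rwa [hfix]) hg, hfix, hflip]
  ring

theorem iteratedDeriv_four_comp_self_of_flip (hg : ContDiff 𝕜 4 g) (hfix : g x = x)
    (hflip : deriv g x = -1) :
    iteratedDeriv 4 (g ∘ g) x = -iteratedDeriv 2 g x * iteratedDeriv 3 (g ∘ g) x := by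
  rw [iteratedDeriv_comp_four hg hg,
    iteratedDeriv_three_comp_self_of_flip (hg.of_le (by norm_num)).contDiffAt hfix hflip,
    hfix, hflip]
  ring

def periodTwoDisplacement (a : 𝕜) (g : 𝕜 → 𝕜) (y : 𝕜) : 𝕜 :=
  a * (g (g y) - y)

theorem iteratedDeriv_periodTwoDisplacement {n : ℕ} (a : 𝕜) (hg : ContDiffAt 𝕜 n g x)
    (hfix : g x = x) :
    iteratedDeriv n (periodTwoDisplacement a g) x
      = a * (iteratedDeriv n (g ∘ g) x - iteratedDeriv n id x) := by
  change iteratedDeriv n (fun y => a * ((g ∘ g) y - id y)) x = _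
  rw [iteratedDeriv_const_mul_field,
    iteratedDeriv_fun_sub (ContDiffAt.comp x (by rwa [hfix]) hg) contDiffAt_id]

theorem iteratedDeriv_periodTwoDisplacement_of_lt_three (a : 𝕜) (hg : ContDiffAt 𝕜 2 g x)
    (hfix : g x = x) (hflip : deriv g x = -1) {m : ℕ} (hm : m < 3) :
    iteratedDeriv m (periodTwoDisplacement a g) x = 0 := by
  rw [iteratedDeriv_periodTwoDisplacement a
    (hg.of_le (by exact_mod_cast Nat.le_of_lt_succ hm)) hfix]
  interval_cases m
  · simp [hfix]
  · simp [deriv_comp_self_of_flip (hg.differentiableAt (by norm_num)) hfix hflip]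
  · simp [iteratedDeriv_two_comp_self_of_flip hg hfix hflip, iteratedDeriv_id]

theorem iteratedDeriv_three_periodTwoDisplacement (a : 𝕜) (hg : ContDiffAt 𝕜 3 g x)
    (hfix : g x = x) (hflip : deriv g x = -1) :
    iteratedDeriv 3 (periodTwoDisplacement a g) x
      = a * (-2 * iteratedDeriv 3 g x - 3 * iteratedDeriv 2 g x ^ 2) := by
  rw [iteratedDeriv_periodTwoDisplacement a hg hfix,
    iteratedDeriv_three_comp_self_of_flip hg hfix hflip]
  simp [iteratedDeriv_id]

theorem iteratedDeriv_four_periodTwoDisplacement (a : 𝕜) (hg : ContDiff 𝕜 4 g)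
    (hfix : g x = x) (hflip : deriv g x = -1) :
    iteratedDeriv 4 (periodTwoDisplacement a g) x
      = -iteratedDeriv 2 g x * iteratedDeriv 3 (periodTwoDisplacement a g) x := by
  rw [iteratedDeriv_periodTwoDisplacement a hg.contDiffAt hfix,
    iteratedDeriv_periodTwoDisplacement a (hg.of_le (by norm_num)).contDiffAt hfix,
    iteratedDeriv_four_comp_self_of_flip hg hfix hflip]
  simp only [iteratedDeriv_id]
  norm_num
  ring

end FlipFixedPoint

/-- Let `f` be `C⁴` with `f' > 0`, and on the flip curve set `p = f'(c)`,
`q = f'(c)·c + f(c)`, `φ(y) = q − p·y − f((q − f(y))/p)`. Then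
`φ''''(c) = (f''(c)/f'(c))·(2·f'''(c) − 3·f''(c)²/f'(c))`; in particular, if
`2·f'''(c)·f'(c) = 3·f''(c)²` then `φ'''(c) = 0` and `φ''''(c) = 0`, so `c` is a
root of `φ` of multiplicity at least five. -/
theorem codim_two_flip_point (f : ℝ → ℝ) (hf : ContDiff ℝ 4 f)
    (hpos : ∀ y : ℝ, 0 < deriv f y) (c : ℝ)
    (p q : ℝ) (hp : p = deriv f c) (hq : q = deriv f c * c + f c) :
    iteratedDeriv 4 (fun y => q - p * y - f ((q - f y) / p)) c
      = (iteratedDeriv 2 f c / deriv f c)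
          * (2 * iteratedDeriv 3 f c - 3 * (iteratedDeriv 2 f c) ^ 2 / deriv f c) ∧
    (2 * iteratedDeriv 3 f c * deriv f c = 3 * (iteratedDeriv 2 f c) ^ 2 →
      iteratedDeriv 3 (fun y => q - p * y - f ((q - f y) / p)) c = 0 ∧
      iteratedDeriv 4 (fun y => q - p * y - f ((q - f y) / p)) c = 0 ∧
      ∀ m : ℕ, m < 5 → iteratedDeriv m (fun y => q - p * y - f ((q - f y) / p)) c = 0) := by
  have hp0 : p ≠ 0 := hp ▸ (hpos c).ne'
  set g : ℝ → ℝ := fun y => (q - f y) / p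
  have hφ : (fun y => q - p * y - f ((q - f y) / p)) = periodTwoDisplacement p g := by
    funext y
    simp only [periodTwoDisplacement, g]
    field_simp
    ring
  have hg : ContDiff ℝ 4 g := (contDiff_const.sub hf).div_const p
  have hfix : g c = c := by
    simp only [g, hq, ← hp]
    field_simp
    ring
  have hgk {k : ℕ} (hk : 0 < k) : iteratedDeriv k g c = -iteratedDeriv k f c / p := by
    simp [g, iteratedDeriv_const_sub hk]
  have hflip : deriv g c = -1 := by
    rw [← iteratedDeriv_one, hgk one_pos, iteratedDeriv_one, ← hp, neg_div, div_self hp0]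
  have h3 : iteratedDeriv 3 (periodTwoDisplacement p g) c
      = 2 * iteratedDeriv 3 f c - 3 * iteratedDeriv 2 f c ^ 2 / deriv f c := by
    rw [iteratedDeriv_three_periodTwoDisplacement p (hg.of_le (by norm_num)).contDiffAt hfix hflip,
      hgk three_pos, hgk two_pos, ← hp]
    field_simp
  have h4 : iteratedDeriv 4 (periodTwoDisplacement p g) c
      = iteratedDeriv 2 f c / deriv f c * iteratedDeriv 3 (periodTwoDisplacement p g) c := by
    rw [iteratedDeriv_four_periodTwoDisplacement p hg hfix hflip, hgk two_pos, ← hp]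
    ring
  rw [hφ]
  refine ⟨by rw [h4, h3], fun hcod => ?_⟩
  have h3z : iteratedDeriv 3 (periodTwoDisplacement p g) c = 0 := by
    rw [h3, ← hcod]
    field_simp [(hpos c).ne']
    ring
  have h4z : iteratedDeriv 4 (periodTwoDisplacement p g) c = 0 := by
    rw [h4, h3z, mul_zero]
  refine ⟨h3z, h4z, fun m hm => ?_⟩
  rcases (by omega : m < 3 ∨ m = 3 ∨ m = 4) with hm | rfl | rfl
  · exact iteratedDeriv_periodTwoDisplacement_of_lt_three p
      (hg.of_le (by norm_num)).contDiffAt hfix hflip hm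
  · exact h3z
  · exact h4z
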